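/- If the t−1 step optimal value function of a finite POMDP is represented by a set Γ_{t−1} of α-vectors, then the t-step optimal value function can be represented by a set Γ_t of α-vectors with cardinality |Γ_t| ≤ |A| · |Γ_{t−1}|^{|Z|}. -/

import Mathlib

/-!
`Pr(z | b, a) · V_{t-1}(b^{a,z})` is the upper envelope of `Γ_{t-1}` paired with the unnormalised
updated belief, which is linear in `b`. A sum over `z` of such envelopes is the envelope over all
choices `f : Z → Γ_{t-1}` of the sums, so `V_t` is the envelope of one α-vector per pair `(a, f)`.
-/

open Finset

lemma Fintype.sum_sup'_eq_sup'_piFinset {ι κ β : Type*} [Fintype ι] [DecidableEq ι]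
    [LinearOrder β] [AddCommMonoid β] [IsOrderedAddMonoid β]
    (t : ι → Finset κ) (ht : ∀ i, (t i).Nonempty) (f : ι → κ → β) :
    ∑ i, (t i).sup' (ht i) (f i) =
      (piFinset t).sup' (piFinset_nonempty.2 ht) (fun g => ∑ i, f i (g i)) := by
  apply le_antisymm
  · choose g hg hg_eq using fun i => exists_mem_eq_sup' (ht i) (f i)
    calc ∑ i, (t i).sup' (ht i) (f i) = ∑ i, f i (g i) := Fintype.sum_congr _ _ hg_eq
      _ ≤ _ := le_sup' (fun g => ∑ i, f i (g i)) (mem_piFinset.2 hg)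
  · exact sup'_le _ _ fun g hg =>
      sum_le_sum fun i _ => le_sup' (f i) (mem_piFinset.1 hg i)

/-- For `∑ w = 0` the argument of `V` is the junk vector `w / 0 = 0`, but then `w = 0` and both
sides vanish. -/
lemma sum_mul_apply_div_sum_eq_sup' {S : Type*} [Fintype S] (V : (S → ℝ) → ℝ)
    (Γ : Finset (S → ℝ)) (hΓ : Γ.Nonempty)
    (hrep : ∀ b : S → ℝ, (∀ s, 0 ≤ b s) → (∑ s, b s) = 1 →
      V b = Γ.sup' hΓ (fun α => ∑ s, α s * b s))
    (w : S → ℝ) (hw : ∀ s, 0 ≤ w s) :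
    (∑ s, w s) * V (fun s => w s / ∑ s', w s') = Γ.sup' hΓ (fun α => ∑ s, α s * w s) := by
  rcases (sum_nonneg fun s _ => hw s : 0 ≤ ∑ s, w s).eq_or_lt with hsum | hpos
  · have hw0 : ∀ s, w s = 0 := fun s =>
      (sum_eq_zero_iff_of_nonneg fun s _ => hw s).1 hsum.symm s (mem_univ s)
    simp [hw0]
  · have hb0 : ∀ s, 0 ≤ w s / ∑ s', w s' := fun s => div_nonneg (hw s) hpos.le
    have hb1 : ∑ s, w s / ∑ s', w s' = 1 := by rw [← sum_div, div_self hpos.ne']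
    rw [hrep _ hb0 hb1, mul₀_sup' hpos.le]
    refine sup'_congr hΓ rfl fun α _ => ?_
    rw [mul_sum]
    refine sum_congr rfl fun s _ => ?_
    field_simp

section Backup

variable {S A Z : Type*} [Fintype S] [Fintype Z]

/-- The α-vector of the conditional plan: take action `a`, then continue with `f z` after
observing `z`. -/
def backupAlphaVector (P : S → A → S → ℝ) (R : S → A → ℝ) (O : A → S → Z → ℝ) (γ : ℝ)
    (a : A) (f : Z → S → ℝ) : S → ℝ :=
  fun s => R s a + γ * ∑ z, ∑ s', P s a s' * O a s' z * f z s'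

lemma sum_backupAlphaVector_mul (P : S → A → S → ℝ) (R : S → A → ℝ) (O : A → S → Z → ℝ)
    (γ : ℝ) (a : A) (f : Z → S → ℝ) (b : S → ℝ) :
    ∑ s, backupAlphaVector P R O γ a f s * b s =
      ∑ s, b s * R s a + γ * ∑ z, ∑ s', f z s' * (O a s' z * ∑ s, P s a s' * b s) := by
  simp only [backupAlphaVector, add_mul, sum_add_distrib]
  congr 1
  · exact sum_congr rfl fun s _ => mul_comm _ _
  · simp only [mul_sum, sum_mul]
    rw [sum_comm]
    refine sum_congr rfl fun z _ => ?_
    rw [sum_comm]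
    exact sum_congr rfl fun s' _ => sum_congr rfl fun s _ => by ring

end Backup

theorem alpha_vector_backup_card_bound_general
    {S A Z : Type} [Fintype S] [Fintype A] [Fintype Z] [Nonempty A]
    (P : S → A → S → ℝ) (R : S → A → ℝ) (O : A → S → Z → ℝ) (γ : ℝ)
    (hγ0 : 0 ≤ γ)
    (hP0 : ∀ s a s', 0 ≤ P s a s')
    (hO0 : ∀ a s' z, 0 ≤ O a s' z)
    -- V_{t-1}, represented by the α-vector set Γ_{t-1}
    (Vprev : (S → ℝ) → ℝ)
    (Γprev : Finset (S → ℝ)) (hΓprev : Γprev.Nonempty)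
    (hrep : ∀ b : S → ℝ, (∀ s, 0 ≤ b s) → (∑ s, b s) = 1 →
      Vprev b = Γprev.sup' hΓprev (fun α => ∑ s, α s * b s))
    -- V_t, the Bellman backup of V_{t-1}
    (Vt : (S → ℝ) → ℝ)
    (hVt : ∀ b : S → ℝ, (∀ s, 0 ≤ b s) → (∑ s, b s) = 1 →
      Vt b = univ.sup' univ_nonempty (fun a =>
        (∑ s, b s * R s a) +
        γ * ∑ z, (∑ s', O a s' z * ∑ s, P s a s' * b s) *
          Vprev (fun s' => (O a s' z * ∑ s, P s a s' * b s) /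
            (∑ s'', O a s'' z * ∑ s, P s a s'' * b s)))) :
    ∃ Γ : Finset (S → ℝ), ∃ hΓ : Γ.Nonempty,
      Γ.card ≤ Fintype.card A * Γprev.card ^ Fintype.card Z ∧
      ∀ b : S → ℝ, (∀ s, 0 ≤ b s) → (∑ s, b s) = 1 →
        Vt b = Γ.sup' hΓ (fun α => ∑ s, α s * b s) := by
  classical
  have hchoices : ((univ : Finset A) ×ˢ Fintype.piFinset fun _ : Z => Γprev).Nonempty :=
    univ_nonempty.product (Fintype.piFinset_nonempty.2 fun _ => hΓprev)
  refine ⟨((univ : Finset A) ×ˢ Fintype.piFinset fun _ : Z => Γprev).image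
      (fun p => backupAlphaVector P R O γ p.1 p.2), hchoices.image _, ?_, ?_⟩
  · exact card_image_le.trans (by simp)
  · intro b hb0 hb1
    rw [hVt b hb0 hb1, sup'_image, sup'_product_left]
    refine sup'_congr _ rfl fun a _ => ?_
    have hobs : ∀ z, (∑ s', O a s' z * ∑ s, P s a s' * b s) *
        Vprev (fun s' => (O a s' z * ∑ s, P s a s' * b s) /
          (∑ s'', O a s'' z * ∑ s, P s a s'' * b s)) =
        Γprev.sup' hΓprev (fun α => ∑ s', α s' * (O a s' z * ∑ s, P s a s' * b s)) :=
      fun z => sum_mul_apply_div_sum_eq_sup' Vprev Γprev hΓprev hrep _ fun s' =>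
        mul_nonneg (hO0 a s' z) (sum_nonneg fun s _ => mul_nonneg (hP0 s a s') (hb0 s))
    simp_rw [hobs]
    rw [Fintype.sum_sup'_eq_sup'_piFinset (fun _ => Γprev) (fun _ => hΓprev), mul₀_sup' hγ0,
      add_sup']
    simp_rw [Function.comp_apply, sum_backupAlphaVector_mul]

/-- If the `(t-1)`-step optimal value function of a finite POMDP is
represented by a set `Γ_{t-1}` of α-vectors, then the Bellman backup `V_t` is
represented by a set `Γ_t` of α-vectors with `|Γ_t| ≤ |A| · |Γ_{t-1}|^{|Z|}`. -/
theorem alpha_vector_backup_card_bound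
    {S A Z : Type} [Fintype S] [Fintype A] [Fintype Z] [Nonempty A]
    (P : S → A → S → ℝ) (R : S → A → ℝ) (O : A → S → Z → ℝ) (γ : ℝ)
    (hγ0 : 0 ≤ γ)
    (hP0 : ∀ s a s', 0 ≤ P s a s') (hP1 : ∀ s a, ∑ s', P s a s' = 1)
    (hO0 : ∀ a s' z, 0 ≤ O a s' z) (hO1 : ∀ a s', ∑ z, O a s' z = 1)
    -- V_{t-1}, represented by the α-vector set Γ_{t-1}
    (Vprev : (S → ℝ) → ℝ)
    (Γprev : Finset (S → ℝ)) (hΓprev : Γprev.Nonempty)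
    (hrep : ∀ b : S → ℝ, (∀ s, 0 ≤ b s) → (∑ s, b s) = 1 →
      Vprev b = Γprev.sup' hΓprev (fun α => ∑ s, α s * b s))
    -- V_t, the Bellman backup of V_{t-1}
    (Vt : (S → ℝ) → ℝ)
    (hVt : ∀ b : S → ℝ, (∀ s, 0 ≤ b s) → (∑ s, b s) = 1 →
      Vt b = univ.sup' univ_nonempty (fun a =>
        (∑ s, b s * R s a) +
        γ * ∑ z, (∑ s', O a s' z * ∑ s, P s a s' * b s) *
          Vprev (fun s' => (O a s' z * ∑ s, P s a s' * b s) /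
            (∑ s'', O a s'' z * ∑ s, P s a s'' * b s)))) :
    ∃ Γ : Finset (S → ℝ), ∃ hΓ : Γ.Nonempty,
      Γ.card ≤ Fintype.card A * Γprev.card ^ Fintype.card Z ∧
      ∀ b : S → ℝ, (∀ s, 0 ≤ b s) → (∑ s, b s) = 1 →
        Vt b = Γ.sup' hΓ (fun α => ∑ s, α s * b s) :=
  alpha_vector_backup_card_bound_general P R O γ hγ0 hP0 hO0 Vprev Γprev hΓprev hrep Vt hVt
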